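/- arXiv:1503.07834 — 3 statements merged into one kernel-verified Lean document; each statement's English description precedes it below -/
import Mathlib

section
/- Let a and d be nonzero complex numbers. Then there exists a positive integer m such that for every positive integer k, either (d^m)^k/(a^m) is not a root of unity, or (d^m)^k/(a^m) = 1. -/
/-!
Inside the multiplicative group `ℂˣ`, every `d ^ k / a` lies in the subgroup `H` generated by
`a` and `d`. Since `H` is a finitely generated abelian group, its torsion subgroup is finite, so
some `m > 0` (its exponent) kills every root of unity in `H`. If `(d ^ k / a) ^ m` is a root of
unity then so is `d ^ k / a`, hence `(d ^ k / a) ^ m = 1`.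
-/

namespace CommGroup

variable {G : Type*} [CommGroup G]

theorem finite_torsion_of_fg [Group.FG G] : Finite (torsion G) := by
  have : Group.FG (torsion G) := by
    rw [Group.fg_iff_subgroup_fg, Subgroup.fg_iff_add_fg]
    exact (Submodule.fg_iff_addSubgroup_fg
      (AddSubgroup.toIntSubmodule (Subgroup.toAddSubgroup (torsion G)))).mp
      (IsNoetherian.noetherian _)
  exact finite_of_fg_isMulTorsion _ fun x => Submonoid.isOfFinOrder_coe.mp x.2

theorem exists_pow_eq_one_of_isOfFinOrder [Group.FG G] :
    ∃ m : ℕ, 0 < m ∧ ∀ x : G, IsOfFinOrder x → x ^ m = 1 := by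
  have := finite_torsion_of_fg (G := G)
  exact ⟨Monoid.exponent (torsion G), Nat.pos_of_ne_zero Monoid.exponent_ne_zero_of_finite,
    fun x hx => congrArg Subtype.val (Monoid.pow_exponent_eq_one (⟨x, hx⟩ : torsion G))⟩

end CommGroup

theorem stmt_0 (a d : ℂ) (ha : a ≠ 0) (hd : d ≠ 0) :
    ∃ m : ℕ, 0 < m ∧ ∀ k : ℕ, 0 < k →
      (¬ ∃ n : ℕ, 0 < n ∧ ((d ^ m) ^ k / a ^ m) ^ n = 1) ∨
      (d ^ m) ^ k / a ^ m = 1 := by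
  let u := Units.mk0 d hd
  let v := Units.mk0 a ha
  let H : Subgroup ℂˣ := Subgroup.closure {u, v}
  obtain ⟨m, hm, hH⟩ := CommGroup.exists_pow_eq_one_of_isOfFinOrder (G := H)
  refine ⟨m, hm, fun k _ => ?_⟩
  let x : H := ⟨u ^ k / v, div_mem (pow_mem (Subgroup.subset_closure (by simp)) k)
    (Subgroup.subset_closure (by simp))⟩
  have hx : (d ^ m) ^ k / a ^ m = ((x ^ m : H) : ℂˣ) := by
    simp [x, u, v, ← pow_mul, mul_comm, div_pow]
  rw [hx, or_iff_not_imp_left, not_not, ← isOfFinOrder_iff_pow_eq_one, Units.isOfFinOrder_val,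
    Submonoid.isOfFinOrder_coe, isOfFinOrder_pow, or_iff_left hm.ne']
  intro hx_fin
  simp [hH x hx_fin]
end

section
/- Let k be an algebraically closed field of characteristic 0, K/k a field extension, and r : K → K a shifting automorphism over k. Then for every integer m ≥ 1, the iterate r^m : K → K is also shifting over k. -/
/-- `α_r(f,n) = f · r(f) ⋯ r^{n-1}(f)`. -/
def alpha {K : Type*} [Field K] (r : K ≃+* K) (f : K) (n : ℕ) : K :=
  ∏ i ∈ Finset.range n, (r ^ i) f

/-- `r : K ≃+* K` is a shifting automorphism over `k`: it fixes `k` pointwise,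
and satisfies conditions (S1) and (S2). -/
def IsShifting (k : Type*) {K : Type*} [Field k] [Field K] [Algebra k K]
    (r : K ≃+* K) : Prop :=
  (∀ x : k, r (algebraMap k K x) = algebraMap k K x) ∧
  (∀ f : K, f ≠ 0 → ∀ n : ℕ, 1 ≤ n → alpha r f n = 1 →
      ∃ c : k, algebraMap k K c = f ∧ c ^ n = 1) ∧
  (∀ f : K, f ≠ 0 → (∃ n : ℕ, 1 ≤ n ∧ (f / r f) ^ n = 1) → f / r f = 1)

/-!
For `g = f / r f` the product `α_r(g, m)` telescopes to `f / r^m f`, and `α_r(f, m n)` is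
`∏_{i < m} r^i (α_{r^m}(f, n))`. So if `α_{r^m}(f, n) = 1` then `α_r(f, mn) = 1`, and (S1)
for `r` puts `f` in `k`. If `(f / r^m f)^n = 1` then `α_r(g^n, m) = 1`, so (S1) for `r` makes
`g^n` an `m`-th root of unity, whence `g = 1` by (S2) for `r` and `f / r^m f = α_r(1, m) = 1`.
-/

namespace alpha

variable {K : Type*} [Field K] (r : K ≃+* K)

lemma zero (f : K) : alpha r f 0 = 1 := Finset.prod_range_zero _

lemma succ (f : K) (n : ℕ) : alpha r f (n + 1) = alpha r f n * (r ^ n) f :=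
  Finset.prod_range_succ _ _

lemma one_left (n : ℕ) : alpha r 1 n = 1 := by
  simp [alpha]

lemma pow_left (f : K) (a n : ℕ) : alpha r (f ^ n) a = alpha r f a ^ n := by
  simp [alpha, ← Finset.prod_pow, map_pow]

lemma mul_right (f : K) (m n : ℕ) :
    alpha r f (m * n) = ∏ i ∈ Finset.range m, (r ^ i) (alpha (r ^ m) f n) := by
  induction n with
  | zero => simp [alpha]
  | succ n ih =>
    rw [mul_add_one, alpha, Finset.prod_range_add, ← alpha, ih, succ,
      ← Finset.prod_mul_distrib]
    refine Finset.prod_congr rfl fun i _ => ?_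
    rw [map_mul, ← pow_mul, ← RingAut.mul_apply, ← pow_add, add_comm i]

lemma div_apply (f : K) (hf : f ≠ 0) (a : ℕ) : alpha r (f / r f) a = f / (r ^ a) f := by
  induction a with
  | zero => rw [zero, pow_zero, RingAut.one_apply, div_self hf]
  | succ a ih =>
    have hra : (r ^ a) f ≠ 0 := (map_ne_zero (r ^ a)).mpr hf
    rw [succ, ih, map_div₀, ← RingAut.mul_apply, ← pow_succ, div_mul_div_comm,
      mul_comm f, mul_div_mul_left _ _ hra]

end alpha

section

variable {k K : Type*} [Field k] [Field K] [Algebra k K] {r : K ≃+* K}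

lemma pow_apply_algebraMap (hfix : ∀ x : k, r (algebraMap k K x) = algebraMap k K x)
    (j : ℕ) (x : k) : (r ^ j) (algebraMap k K x) = algebraMap k K x := by
  rw [RingAut.coe_pow]
  exact Function.IsFixedPt.iterate (hfix x) j

lemma alpha_algebraMap (hfix : ∀ x : k, r (algebraMap k K x) = algebraMap k K x)
    (c : k) (n : ℕ) : alpha r (algebraMap k K c) n = algebraMap k K (c ^ n) := by
  simp only [alpha, pow_apply_algebraMap hfix, Finset.prod_const, Finset.card_range,
    map_pow]

lemma exists_algebraMap_eq_of_alpha_pow_eq_one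
    (hfix : ∀ x : k, r (algebraMap k K x) = algebraMap k K x)
    (hS1 : ∀ f : K, f ≠ 0 → ∀ n : ℕ, 1 ≤ n → alpha r f n = 1 →
      ∃ c : k, algebraMap k K c = f ∧ c ^ n = 1)
    {m : ℕ} (hm : 1 ≤ m) (f : K) (hf : f ≠ 0) (n : ℕ) (hn : 1 ≤ n)
    (hα : alpha (r ^ m) f n = 1) : ∃ c : k, algebraMap k K c = f ∧ c ^ n = 1 := by
  have hαmn : alpha r f (m * n) = 1 := by
    simp [alpha.mul_right, hα]
  obtain ⟨c, rfl, -⟩ := hS1 f hf (m * n) (Nat.mul_pos hm hn) hαmn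
  refine ⟨c, rfl, (algebraMap k K).injective ?_⟩
  rw [← alpha_algebraMap (pow_apply_algebraMap hfix m), hα, map_one]

lemma div_pow_apply_eq_one_of_pow_eq_one
    (hS1 : ∀ f : K, f ≠ 0 → ∀ n : ℕ, 1 ≤ n → alpha r f n = 1 →
      ∃ c : k, algebraMap k K c = f ∧ c ^ n = 1)
    (hS2 : ∀ f : K, f ≠ 0 → (∃ n : ℕ, 1 ≤ n ∧ (f / r f) ^ n = 1) → f / r f = 1)
    {m : ℕ} (hm : 1 ≤ m) (f : K) (hf : f ≠ 0)
    (hroot : ∃ n : ℕ, 1 ≤ n ∧ (f / (r ^ m) f) ^ n = 1) : f / (r ^ m) f = 1 := by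
  obtain ⟨n, hn, hpow⟩ := hroot
  have hg : f / r f ≠ 0 := div_ne_zero hf ((map_ne_zero r).mpr hf)
  rw [← alpha.div_apply r f hf] at hpow ⊢
  rw [← alpha.pow_left] at hpow
  obtain ⟨c, hc, hcm⟩ := hS1 _ (pow_ne_zero n hg) m hm hpow
  have hg_root : (f / r f) ^ (n * m) = 1 := by
    rw [pow_mul, ← hc, ← map_pow, hcm, map_one]
  rw [hS2 f hf ⟨n * m, Nat.mul_pos hn hm, hg_root⟩, alpha.one_left]

end

theorem stmt_12_general {k K : Type*} [Field k] [Field K] [Algebra k K]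
    (r : K ≃+* K) (hr : IsShifting k r) (m : ℕ) (hm : 1 ≤ m) :
    IsShifting k (r ^ m) := by
  obtain ⟨hfix, hS1, hS2⟩ := hr
  exact ⟨pow_apply_algebraMap hfix m, exists_algebraMap_eq_of_alpha_pow_eq_one hfix hS1 hm,
    div_pow_apply_eq_one_of_pow_eq_one hS1 hS2 hm⟩

theorem stmt_12 {k K : Type*} [Field k] [Field K] [Algebra k K]
    [IsAlgClosed k] [CharZero k]
    (r : K ≃+* K) (hr : IsShifting k r) (m : ℕ) (hm : 1 ≤ m) :
    IsShifting k (r ^ m) :=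
  stmt_12_general r hr m hm
end

section
/- Let k be an algebraically closed field of characteristic 0, K/k an extension, and r : K → K a shifting automorphism over k. If α_r(f,n) = ω_k · τ_{r^n}(g) is an r^n-root of unity, then f = ζ · τ_r(g) for some root of unity ζ ∈ k; i.e., f is an r-root of unity. -/
/-!
Write `f = F · g / r(g)`. Since `α_r` is multiplicative in `f` and `α_r(g / r(g), n) = g / r^n(g)`
telescopes, the hypothesis becomes `α_r(F, n) = ω`. As `ω ∈ k` is fixed by `r`, the cocycle
identity gives `α_r(F, n m) = ω ^ m = 1` for `ω ^ m = 1`, and (S1) puts `F` among the roots of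
unity of `k`.
-/

section Alpha

variable {K : Type*} [Field K] (r : K ≃+* K)

lemma alpha_add (x : K) (a b : ℕ) :
    alpha r x (a + b) = alpha r x a * (r ^ a) (alpha r x b) := by
  simp only [alpha, Finset.prod_range_add, map_prod, pow_add, RingAut.mul_apply]

lemma alpha_mul (x y : K) (n : ℕ) : alpha r (x * y) n = alpha r x n * alpha r y n := by
  simp only [alpha, map_mul, Finset.prod_mul_distrib]

lemma alpha_div_map_self {g : K} (hg : g ≠ 0) (n : ℕ) :
    alpha r (g / r g) n = g / (r ^ n) g := by
  induction n with
  | zero => simp [alpha, hg]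
  | succ n ih =>
    rw [alpha_add, ih]
    simp only [alpha, Finset.range_one, Finset.prod_singleton, pow_zero, RingAut.one_apply,
      map_div₀, pow_succ, RingAut.mul_apply]
    have : (r ^ n) g ≠ 0 := (map_ne_zero _).mpr hg
    field_simp

lemma pow_apply_of_map_eq {y : K} (hy : r y = y) (n : ℕ) : (r ^ n) y = y := by
  induction n with
  | zero => rfl
  | succ n ih => rw [pow_succ, RingAut.mul_apply, hy, ih]

lemma alpha_mul_eq_pow {x : K} {n : ℕ} (h : r (alpha r x n) = alpha r x n) (j : ℕ) :
    alpha r x (n * j) = alpha r x n ^ j := by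
  induction j with
  | zero => simp [alpha]
  | succ j ih => rw [Nat.mul_succ, alpha_add, ih, pow_apply_of_map_eq r h, pow_succ]

lemma ne_zero_of_alpha_eq_one {x : K} {n : ℕ} (hn : 1 ≤ n) (h : alpha r x n = 1) : x ≠ 0 := by
  rintro rfl
  exact one_ne_zero (h.symm.trans (Finset.prod_eq_zero (Finset.mem_range.mpr hn) (map_zero _)))

end Alpha

theorem stmt_15_general {k K : Type*} [Field k] [Field K] [Algebra k K]
    (r : K ≃+* K) (hr : IsShifting k r)
    (f g : K) (hg : g ≠ 0) (n : ℕ) (hn : 1 ≤ n)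
    (ω : k) (hω : ∃ m : ℕ, 1 ≤ m ∧ ω ^ m = 1)
    (hα : alpha r f n = algebraMap k K ω * (g / (r ^ n) g)) :
    ∃ ζ : k, (∃ m : ℕ, 1 ≤ m ∧ ζ ^ m = 1) ∧ f = algebraMap k K ζ * (g / r g) := by
  obtain ⟨hfix, hS1, -⟩ := hr
  obtain ⟨m, hm, hωm⟩ := hω
  obtain ⟨F, rfl⟩ : ∃ F, f = F * (g / r g) :=
    ⟨f * (r g / g), by field_simp [(map_ne_zero r).mpr hg]⟩
  have hαF : alpha r F n = algebraMap k K ω := by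
    rw [alpha_mul, alpha_div_map_self r hg] at hα
    exact mul_right_cancel₀ (div_ne_zero hg ((map_ne_zero _).mpr hg)) hα
  have hnm : 1 ≤ n * m := Nat.mul_pos hn hm
  have hαF_one : alpha r F (n * m) = 1 := by
    rw [alpha_mul_eq_pow r (by rw [hαF, hfix]), hαF, ← map_pow, hωm, map_one]
  obtain ⟨c, rfl, hc⟩ := hS1 F (ne_zero_of_alpha_eq_one r hnm hαF_one) _ hnm hαF_one
  exact ⟨c, ⟨n * m, hnm, hc⟩, rfl⟩

theorem stmt_15 {k K : Type*} [Field k] [Field K] [Algebra k K]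
    [IsAlgClosed k] [CharZero k]
    (r : K ≃+* K) (hr : IsShifting k r)
    (f g : K) (hf : f ≠ 0) (hg : g ≠ 0) (n : ℕ) (hn : 1 ≤ n)
    (ω : k) (hω : ∃ m : ℕ, 1 ≤ m ∧ ω ^ m = 1)
    (hα : alpha r f n = algebraMap k K ω * (g / (r ^ n) g)) :
    ∃ ζ : k, (∃ m : ℕ, 1 ≤ m ∧ ζ ^ m = 1) ∧ f = algebraMap k K ζ * (g / r g) :=
  stmt_15_general r hr f g hg n hn ω hω hα
end
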